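/- arXiv:2310.18182 — 4 statements merged into one kernel-verified Lean document; each statement's English description precedes it below -/
import Mathlib

section
/- Let C be a compact metric space, I an interval of ℝ, and g : I × C → ℝ a function such that g and its partial derivative ∂g/∂t (in the first variable) exist and are continuous on I × C. Define φ(t) := sup_{x ∈ C} g(t,x) and C_t := {x ∈ C : g(t,x) = φ(t)}. Then φ is continuous on I, and for every t ∈ I that is not the left endpoint of I, the upper left-hand Dini derivative of φ at t satisfies d_L^+ φ(t) = min_{x ∈ C_t} (∂g/∂t)(t,x). -/
open Filter Topology

/-- The upper left-hand Dini derivative `limsup_{h → 0⁺} (f t - f (t - h)) / h`,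
valued in the extended reals. -/
noncomputable def diniUL (f : ℝ → ℝ) (t : ℝ) : EReal :=
  Filter.limsup (fun h : ℝ => (((f t - f (t - h)) / h : ℝ) : EReal)) (𝓝[>] (0 : ℝ))

/-!
If `x` maximises `g t`, then `φ t - φ (t - h) ≤ g t x - g (t - h) x`, so the left difference
quotients of `φ` are eventually below anything larger than `g' t x`; take `x` minimising `g' t`
on `C_t`. Conversely, if `x` maximises `g (t - h)`, the mean value theorem gives
`φ t - φ (t - h) ≥ h * g' c x` for some `c ∈ (t - h, t)`. By compactness of `C` the maximisers of
`g s` lie in any given neighbourhood of `C_t` once `s` is close to `t`, so the tube lemma bounds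
`g' c x` from below by anything smaller than `min_{C_t} g' t`. Hence `φ` has a left derivative at
`t`, equal to that minimum.
-/

open Set

section Compact

variable {X C : Type*} [TopologicalSpace X] [TopologicalSpace C] {g g' : X → C → ℝ}

theorem isClosed_setOf_forall_le (hg : Continuous ↿g) :
    IsClosed {p : X × C | ∀ y, g p.1 y ≤ g p.1 p.2} := by
  simp only [ofPred_forall]
  exact isClosed_iInter fun y => isClosed_le (hg.comp (continuous_fst.prodMk continuous_const)) hg

theorem isClosed_setOf_isMax {f : C → ℝ} (hf : Continuous f) : IsClosed {x | ∀ y, f y ≤ f x} := by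
  simp only [ofPred_forall]
  exact isClosed_iInter fun y => isClosed_le continuous_const hf

variable [CompactSpace C]

theorem ContinuousOn.bddAbove_range_of_mem {S : Set X} (hg : ContinuousOn ↿g (S ×ˢ univ))
    {s : X} (hs : s ∈ S) : BddAbove (range (g s)) :=
  (isCompact_range (continuousOn_univ.1 (hg.uncurry_left s hs))).bddAbove

theorem continuous_iSup_of_compactSpace (hg : Continuous ↿g) :
    Continuous fun t => ⨆ x, g t x := by
  simpa only [image_univ, sSup_range] using isCompact_univ.continuous_sSup hg

theorem Continuous.exists_isMinOn_setOf_isMax [Nonempty C] {f f' : C → ℝ} (hf : Continuous f)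
    (hf' : Continuous f') :
    ∃ x ∈ {x | ∀ y, f y ≤ f x}, IsMinOn f' {x | ∀ y, f y ≤ f x} x := by
  obtain ⟨x₀, hx₀⟩ := hf.exists_forall_ge (by simp)
  exact (isClosed_setOf_isMax hf).isCompact.exists_isMinOn ⟨x₀, hx₀⟩ hf'.continuousOn

theorem eventually_forall_isMax_imp_mem (hg : Continuous ↿g) {t : X} {U : Set C}
    (hU : IsOpen U) (htU : ∀ x, (∀ y, g t y ≤ g t x) → x ∈ U) :
    ∀ᶠ s in 𝓝 t, ∀ x, (∀ y, g s y ≤ g s x) → x ∈ U := by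
  have hZ : IsClosed (Prod.fst '' ({p : X × C | ∀ y, g p.1 y ≤ g p.1 p.2} ∩ {p | p.2 ∉ U})) :=
    isClosedMap_fst_of_compactSpace _
      ((isClosed_setOf_forall_le hg).inter (hU.isClosed_compl.preimage continuous_snd))
  have htZ : t ∉ Prod.fst '' ({p : X × C | ∀ y, g p.1 y ≤ g p.1 p.2} ∩ {p | p.2 ∉ U}) := by
    rintro ⟨⟨_, x⟩, ⟨hmax, hxU⟩, rfl⟩
    exact hxU (htU x hmax)
  filter_upwards [hZ.isOpen_compl.mem_nhds htZ] with s hs x hmax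
  by_contra hxU
  exact hs ⟨(s, x), ⟨hmax, hxU⟩, rfl⟩

theorem eventually_forall_isMax_imp_lt (hg : Continuous ↿g) (hg' : Continuous ↿g') {t : X}
    {a : ℝ} (ha : ∀ x, (∀ y, g t y ≤ g t x) → a < g' t x) :
    ∀ᶠ p in 𝓝 t ×ˢ 𝓝 t, ∀ x, (∀ y, g p.1 y ≤ g p.1 x) → a < g' p.2 x := by
  have hK : IsCompact {x | ∀ y, g t y ≤ g t x} :=
    (isClosed_setOf_isMax (hg.uncurry_left t)).isCompact
  obtain ⟨u, v, hu, hv, htu, hKv, huv⟩ :=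
    generalized_tube_lemma isCompact_singleton hK (isOpen_lt continuous_const hg')
      (by rintro ⟨s, x⟩ ⟨rfl, hx⟩; exact ha x hx)
  filter_upwards [(eventually_forall_isMax_imp_mem hg hv hKv).prod_mk
    (hu.mem_nhds (htu rfl))] with p ⟨hp₁, hp₂⟩ x hmax
  exact huv (mk_mem_prod hp₂ (hp₁ x hmax))

theorem ContinuousOn.continuousOn_iSup {S : Set X}
    (hg : ContinuousOn ↿g (S ×ˢ univ)) : ContinuousOn (fun t => ⨆ x, g t x) S := by
  rw [continuousOn_iff_continuous_domRestrict]
  exact continuous_iSup_of_compactSpace (g := fun s : S => g s)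
    (hg.comp_continuous (continuous_subtype_val.prodMap continuous_id)
      fun p => ⟨p.1.2, trivial⟩)

theorem ContinuousOn.eventually_forall_isMax_imp_lt {S : Set X}
    (hg : ContinuousOn ↿g (S ×ˢ univ)) (hg' : ContinuousOn ↿g' (S ×ˢ univ)) {t : X}
    (ht : t ∈ S) {a : ℝ} (ha : ∀ x, (∀ y, g t y ≤ g t x) → a < g' t x) :
    ∀ᶠ p in 𝓝[S] t ×ˢ 𝓝[S] t, ∀ x, (∀ y, g p.1 y ≤ g p.1 x) → a < g' p.2 x := by
  rw [← map_nhds_subtype_val ⟨t, ht⟩, prod_map_map_eq]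
  exact _root_.eventually_forall_isMax_imp_lt (g := fun s : S => g s) (g' := fun s : S => g' s)
    (hg.comp_continuous (continuous_subtype_val.prodMap continuous_id)
      fun p => ⟨p.1.2, trivial⟩)
    (hg'.comp_continuous (continuous_subtype_val.prodMap continuous_id)
      fun p => ⟨p.1.2, trivial⟩) (t := ⟨t, ht⟩) ha

end Compact

section Real

theorem HasDerivWithinAt.tendsto_slope_left {f : ℝ → ℝ} {f' t : ℝ}
    (hf : HasDerivWithinAt f f' (Iic t) t) :
    Tendsto (fun h => (f t - f (t - h)) / h) (𝓝[>] 0) (𝓝 f') := by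
  have hsub : Tendsto (fun h : ℝ => t - h) (𝓝[>] 0) (𝓝[<] t) := by
    refine tendsto_nhdsWithin_of_tendsto_nhds_of_eventually_within _ ?_ ?_
    · simpa using ((continuous_sub_left t).tendsto 0).mono_left nhdsWithin_le_nhds
    · filter_upwards [self_mem_nhdsWithin] with h (hh : 0 < h)
      exact sub_lt_self t hh
  rw [hasDerivWithinAt_iff_tendsto_slope, Iic_sdiff_right] at hf
  refine (hf.comp hsub).congr fun h => ?_
  rw [Function.comp_apply, slope_def_field, sub_sub_cancel_left, div_neg, ← neg_div, neg_sub]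

theorem exists_hasDerivWithinAt_Icc_eq_slope {f f' : ℝ → ℝ} {a b : ℝ} (hab : a < b)
    (hf : ∀ x ∈ Icc a b, HasDerivWithinAt f (f' x) (Icc a b) x) :
    ∃ c ∈ Ioo a b, f' c = (f b - f a) / (b - a) :=
  exists_hasDerivAt_eq_slope f f' hab (fun x hx => (hf x hx).continuousWithinAt)
    fun x hx => (hf x (Ioo_subset_Icc_self hx)).hasDerivAt (Icc_mem_nhds hx.1 hx.2)

theorem eq_ciSup_iff_forall_le {ι α : Type*} [ConditionallyCompleteLattice α] {f : ι → α}
    (hf : BddAbove (range f)) {i : ι} : f i = ⨆ j, f j ↔ ∀ j, f j ≤ f i := by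
  have : Nonempty ι := ⟨i⟩
  exact ⟨fun h j => h ▸ le_ciSup hf j, fun h => le_antisymm (le_ciSup hf i) (ciSup_le h)⟩

theorem ciSup_sub_ciSup_le {ι : Type*} {f₁ f₂ : ι → ℝ} (hf₂ : BddAbove (range f₂)) {i : ι}
    (hi : ∀ j, f₁ j ≤ f₁ i) : (⨆ j, f₁ j) - ⨆ j, f₂ j ≤ f₁ i - f₂ i := by
  have : Nonempty ι := ⟨i⟩
  linarith [ciSup_le hi, le_ciSup hf₂ i]

theorem eventually_Icc_sub_subset {s : Set ℝ} {t : ℝ} (hs : s ∈ 𝓝[≤] t) :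
    ∀ᶠ h in 𝓝[>] 0, Icc (t - h) t ⊆ s := by
  obtain ⟨l, hlt, hls⟩ := mem_nhdsLE_iff_exists_Icc_subset.1 hs
  filter_upwards [Ioc_mem_nhdsGT (sub_pos.2 hlt)] with h hh
  exact (Icc_subset_Icc_left (by linarith [hh.2])).trans hls

variable {C : Type*} [TopologicalSpace C] [CompactSpace C] {I : Set ℝ} {g g' : ℝ → C → ℝ}
  {t : ℝ}

theorem eventually_slope_left_iSup_le (hg : ContinuousOn ↿g (I ×ˢ univ)) (hIt : I ∈ 𝓝[≤] t)
    {x : C} (hx : ∀ y, g t y ≤ g t x) :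
    ∀ᶠ h in 𝓝[>] 0, ((⨆ y, g t y) - ⨆ y, g (t - h) y) / h ≤ (g t x - g (t - h) x) / h := by
  filter_upwards [eventually_Icc_sub_subset hIt, self_mem_nhdsWithin] with h hsub (hh : 0 < h)
  exact div_le_div_of_nonneg_right
    (ciSup_sub_ciSup_le (hg.bddAbove_range_of_mem (hsub ⟨le_rfl, by linarith⟩)) hx) hh.le

theorem eventually_lt_slope_left_iSup [Nonempty C] (hIt : I ∈ 𝓝[≤] t)
    (hderiv : ∀ x : C, ∀ s ∈ I, HasDerivWithinAt (fun r => g r x) (g' s x) I s)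
    (hg : ContinuousOn ↿g (I ×ˢ univ)) (hg' : ContinuousOn ↿g' (I ×ˢ univ)) (ht : t ∈ I)
    {a : ℝ} (ha : ∀ x, (∀ y, g t y ≤ g t x) → a < g' t x) :
    ∀ᶠ h in 𝓝[>] 0, a < ((⨆ y, g t y) - ⨆ y, g (t - h) y) / h := by
  obtain ⟨V, hV, hVa⟩ := eventually_prod_self_iff'.1 (hg.eventually_forall_isMax_imp_lt hg' ht ha)
  filter_upwards [eventually_Icc_sub_subset (inter_mem (nhdsWithin_le_of_mem hIt hV) hIt),
    self_mem_nhdsWithin] with h hsub (hh : 0 < h)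
  have hlt : t - h < t := sub_lt_self t hh
  have hleft : t - h ∈ V ∩ I := hsub (left_mem_Icc.2 hlt.le)
  obtain ⟨x, hx⟩ := (continuousOn_univ.1 (hg.uncurry_left _ hleft.2)).exists_forall_ge (by simp)
  obtain ⟨c, hc, hcx⟩ := exists_hasDerivWithinAt_Icc_eq_slope hlt fun s hs =>
    (hderiv x s (hsub hs).2).mono fun r hr => (hsub hr).2
  calc a < g' c x := hVa _ hleft.1 c (hsub (Ioo_subset_Icc_self hc)).1 x hx
    _ = (g t x - g (t - h) x) / h := by rw [hcx, sub_sub_cancel]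
    _ ≤ _ := div_le_div_of_nonneg_right
      (by linarith [ciSup_sub_ciSup_le (hg.bddAbove_range_of_mem ht) hx]) hh.le

theorem tendsto_slope_left_iSup [Nonempty C] (hIt : I ∈ 𝓝[≤] t)
    (hderiv : ∀ x : C, ∀ s ∈ I, HasDerivWithinAt (fun r => g r x) (g' s x) I s)
    (hg : ContinuousOn ↿g (I ×ˢ univ)) (hg' : ContinuousOn ↿g' (I ×ˢ univ)) (ht : t ∈ I)
    {x : C} (hx : ∀ y, g t y ≤ g t x) (hmin : IsMinOn (g' t) {x | ∀ y, g t y ≤ g t x} x) :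
    Tendsto (fun h => ((⨆ y, g t y) - ⨆ y, g (t - h) y) / h) (𝓝[>] 0) (𝓝 (g' t x)) := by
  refine tendsto_order.2 ⟨fun a ha => ?_, fun b hb => ?_⟩
  · exact eventually_lt_slope_left_iSup hIt hderiv hg hg' ht fun y hy => ha.trans_le (hmin hy)
  · have hslope := ((hderiv x t ht).mono_of_mem_nhdsWithin hIt).tendsto_slope_left
    filter_upwards [eventually_slope_left_iSup_le hg hIt hx, hslope.eventually (gt_mem_nhds hb)]
      with h hφ hgx using hφ.trans_lt hgx

end Real

/-- for `g : I × C → ℝ` with `g` and `∂g/∂t` continuous and `C` compact,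
`φ(t) = sup_{x ∈ C} g(t,x)` is continuous, and at every `t ∈ I` which is not the left
endpoint of `I` the upper left-hand Dini derivative of `φ` equals
`min_{x ∈ C_t} (∂g/∂t)(t,x)`, where `C_t = {x ∈ C : g(t,x) = φ(t)}`. -/
theorem statement3
    {C : Type} [MetricSpace C] [CompactSpace C] [Nonempty C]
    (I : Set ℝ) (hI : I.OrdConnected)
    (g g' : ℝ → C → ℝ)
    (hderiv : ∀ x : C, ∀ t ∈ I, HasDerivWithinAt (fun s => g s x) (g' t x) I t)
    (hgcont : ContinuousOn (fun p : ℝ × C => g p.1 p.2) (I ×ˢ Set.univ))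
    (hg'cont : ContinuousOn (fun p : ℝ × C => g' p.1 p.2) (I ×ˢ Set.univ)) :
    ContinuousOn (fun t => ⨆ x : C, g t x) I ∧
    ∀ t ∈ I, (∃ s ∈ I, s < t) →
      IsLeast ((fun x : C => ((g' t x : ℝ) : EReal)) ''
          {x : C | g t x = ⨆ y : C, g t y})
        (diniUL (fun s => ⨆ x : C, g s x) t) := by
  refine ⟨hgcont.continuousOn_iSup, ?_⟩
  rintro t ht ⟨s, hs, hst⟩
  have hIt : I ∈ 𝓝[≤] t := mem_of_superset (Icc_mem_nhdsLE hst) (hI.out hs ht)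
  have hCt : {x : C | g t x = ⨆ y, g t y} = {x | ∀ y, g t y ≤ g t x} :=
    ext fun x => eq_ciSup_iff_forall_le (hgcont.bddAbove_range_of_mem ht)
  obtain ⟨x, hx, hmin⟩ := Continuous.exists_isMinOn_setOf_isMax
    (continuousOn_univ.1 (hgcont.uncurry_left t ht))
    (continuousOn_univ.1 (hg'cont.uncurry_left t ht))
  have hdini : diniUL (fun s => ⨆ x : C, g s x) t = g' t x :=
    (EReal.tendsto_coe.2 (tendsto_slope_left_iSup hIt hderiv hgcont hg'cont ht hx hmin)).limsup_eq
  rw [hCt, hdini]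
  exact ⟨mem_image_of_mem _ hx, forall_mem_image.2 fun y hy => EReal.coe_le_coe_iff.2 (hmin hy)⟩
end

section
/- Let C be a compact metric space, I an interval of ℝ, and g : I × C → ℝ a function such that g and its partial derivative ∂g/∂t (in the first variable) exist and are continuous on I × C. Define φ(t) := sup_{x ∈ C} g(t,x) and C_t := {x ∈ C : g(t,x) = φ(t)}. Then for every t ∈ I that is not the left endpoint of I, there exists x ∈ C_t such that the upper left-hand Dini derivative of φ at t satisfies d_L^+ φ(t) ≥ (∂g/∂t)(t,x); in particular d_L^+ φ(t) ≥ min_{x ∈ C_t} (∂g/∂t)(t,x). -/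
/-!
Take `aₙ ↑ t` in `I` and let `xₙ` maximize `g(aₙ, ·)`. Then
`φ t - φ aₙ ≥ g(t, xₙ) - g(aₙ, xₙ) = (t - aₙ) ∂g/∂t(ξₙ, xₙ)` for some `ξₙ ∈ (aₙ, t)`
by the mean value theorem. By compactness a subsequence of `xₙ` converges to some `x₀`,
which maximizes `g(t, ·)` by continuity of `g`; continuity of `∂g/∂t` makes the lower
bounds of the difference quotients converge to `∂g/∂t(t, x₀)`, which is therefore at most
`d_L^+ φ(t)`.
-/

open Filter Topology

open Set

theorem le_limsup_of_tendsto_of_le_comp {α β γ : Type*} [CompleteLinearOrder γ]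
    [TopologicalSpace γ] [OrderTopology γ] {u : α → γ} {l : Filter α} {l' : Filter β}
    [l'.NeBot] {h : β → α} {v : β → γ} {L : γ} (hh : Tendsto h l' l)
    (hv : Tendsto v l' (𝓝 L))
    (hle : ∀ᶠ n in l', v n ≤ u (h n)) : L ≤ limsup u l :=
  calc L = limsup v l' := hv.limsup_eq.symm
    _ ≤ limsup (u ∘ h) l' := limsup_le_limsup hle
    _ = limsup u (map h l') := limsup_comp u h l'
    _ ≤ limsup u l := limsup_le_limsup_of_le hh

theorem le_diniUL_of_tendsto {f : ℝ → ℝ} {t L : ℝ} {a v : ℕ → ℝ}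
    (ha : Tendsto a atTop (𝓝 t)) (hat : ∀ n, a n < t) (hv : Tendsto v atTop (𝓝 L))
    (hle : ∀ n, v n ≤ (f t - f (a n)) / (t - a n)) : (L : EReal) ≤ diniUL f t := by
  have hstep : Tendsto (fun n => t - a n) atTop (𝓝[>] 0) :=
    tendsto_nhdsWithin_iff.2
      ⟨by simpa using (tendsto_const_nhds (x := t)).sub ha,
        Eventually.of_forall fun n => sub_pos.2 (hat n)⟩
  refine le_limsup_of_tendsto_of_le_comp hstep (EReal.tendsto_coe.2 hv)
    (Eventually.of_forall fun n => ?_)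
  simpa only [sub_sub_cancel, EReal.coe_le_coe_iff] using hle n

theorem exists_mem_Ioo_eq_slope_of_hasDerivWithinAt {f f' : ℝ → ℝ} {a b : ℝ} (hab : a < b)
    (hf : ∀ u ∈ Icc a b, HasDerivWithinAt f (f' u) (Icc a b) u) :
    ∃ c ∈ Ioo a b, f' c = (f b - f a) / (b - a) :=
  exists_hasDerivAt_eq_slope f f' hab (fun u hu => (hf u hu).continuousWithinAt)
    fun u hu => (hf u (Ioo_subset_Icc_self hu)).hasDerivAt (Icc_mem_nhds hu.1 hu.2)

theorem ContinuousOn.tendsto_comp_prodMk {β X Y Z : Type*} [TopologicalSpace X]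
    [TopologicalSpace Y] [TopologicalSpace Z] {G : X × Y → Z} {s : Set X}
    (hG : ContinuousOn G (s ×ˢ univ)) {x : X} (hx : x ∈ s) {y : Y} {l : Filter β}
    {a : β → X} {b : β → Y} (ha : Tendsto a l (𝓝 x)) (has : ∀ᶠ n in l, a n ∈ s)
    (hb : Tendsto b l (𝓝 y)) : Tendsto (fun n => G (a n, b n)) l (𝓝 (G (x, y))) :=
  (hG (x, y) ⟨hx, trivial⟩).tendsto.comp
    (tendsto_nhdsWithin_iff.2 ⟨ha.prodMk_nhds hb, has.mono fun _ hn => ⟨hn, trivial⟩⟩)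

theorem ciSup_eq_of_forall_le {ι : Type*} {f : ι → ℝ} {i : ι} (h : ∀ j, f j ≤ f i) :
    ⨆ j, f j = f i :=
  haveI : Nonempty ι := ⟨i⟩
  ciSup_eq_of_forall_le_of_forall_lt_exists_gt h fun _ hw => ⟨i, hw⟩

section Parametric

variable {C : Type*} {I : Set ℝ} {g : ℝ → C → ℝ}

theorem exists_mem_Ioo_le_slope_iSup {g' : ℝ → C → ℝ} {a t : ℝ} (hat : a < t)
    (hI : Icc a t ⊆ I) {x : C}
    (hderiv : ∀ u ∈ I, HasDerivWithinAt (fun s => g s x) (g' u x) I u)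
    (hx : ∀ y, g a y ≤ g a x) (hbdd : BddAbove (range (g t))) :
    ∃ ξ ∈ Ioo a t, g' ξ x ≤ ((⨆ y, g t y) - ⨆ y, g a y) / (t - a) := by
  obtain ⟨ξ, hξ, hslope⟩ := exists_mem_Ioo_eq_slope_of_hasDerivWithinAt (f := fun s => g s x)
    hat fun u hu => (hderiv u (hI hu)).mono hI
  refine ⟨ξ, hξ, hslope ▸ div_le_div_of_nonneg_right ?_ (sub_pos.2 hat).le⟩
  rw [ciSup_eq_of_forall_le hx]
  exact sub_le_sub_right (le_ciSup hbdd x) _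

variable [TopologicalSpace C]

theorem continuous_slice_of_continuousOn_prod
    (hg : ContinuousOn (fun p : ℝ × C => g p.1 p.2) (I ×ˢ univ)) {u : ℝ} (hu : u ∈ I) :
    Continuous (g u) :=
  hg.comp_continuous (continuous_const.prodMk continuous_id) fun _ => ⟨hu, trivial⟩

theorem exists_forall_le_of_continuousOn_prod [CompactSpace C] [Nonempty C]
    (hg : ContinuousOn (fun p : ℝ × C => g p.1 p.2) (I ×ˢ univ)) {u : ℝ} (hu : u ∈ I) :
    ∃ x, ∀ y, g u y ≤ g u x :=
  (continuous_slice_of_continuousOn_prod hg hu).exists_forall_ge (by simp [cocompact_eq_bot])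

theorem forall_le_of_tendsto_of_forall_le {β : Type*} {l : Filter β} [l.NeBot]
    (hg : ContinuousOn (fun p : ℝ × C => g p.1 p.2) (I ×ˢ univ)) {t : ℝ} (ht : t ∈ I)
    {a : β → ℝ} {x : β → C} {x₀ : C} (ha : Tendsto a l (𝓝 t)) (haI : ∀ n, a n ∈ I)
    (hx : Tendsto x l (𝓝 x₀)) (hmax : ∀ n y, g (a n) y ≤ g (a n) (x n)) (y : C) :
    g t y ≤ g t x₀ :=
  le_of_tendsto_of_tendsto' (hg.tendsto_comp_prodMk ht ha (.of_forall haI) tendsto_const_nhds)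
    (hg.tendsto_comp_prodMk ht ha (.of_forall haI) hx) fun n => hmax n y

end Parametric

/-- for `g : I × C → ℝ` with `g` and `∂g/∂t` continuous and `C` compact,
at every `t ∈ I` which is not the left endpoint of `I` there is a maximizer `x ∈ C_t` of
`g(t,·)` with `d_L^+ φ(t) ≥ (∂g/∂t)(t,x)`, where `φ(t) = sup_{x ∈ C} g(t,x)`; in
particular `d_L^+ φ(t) ≥ min_{x ∈ C_t} (∂g/∂t)(t,x)`. -/
theorem statement5
    {C : Type} [MetricSpace C] [CompactSpace C] [Nonempty C]
    (I : Set ℝ) (hI : I.OrdConnected)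
    (g g' : ℝ → C → ℝ)
    (hderiv : ∀ x : C, ∀ t ∈ I, HasDerivWithinAt (fun s => g s x) (g' t x) I t)
    (hgcont : ContinuousOn (fun p : ℝ × C => g p.1 p.2) (I ×ˢ Set.univ))
    (hg'cont : ContinuousOn (fun p : ℝ × C => g' p.1 p.2) (I ×ˢ Set.univ)) :
    ∀ t ∈ I, (∃ s ∈ I, s < t) →
      ∃ x : C, g t x = (⨆ y : C, g t y) ∧
        ((g' t x : ℝ) : EReal) ≤ diniUL (fun s => ⨆ y : C, g s y) t := by
  rintro t ht ⟨s, hs, hst⟩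
  obtain ⟨a, -, haIoo, ha⟩ := exists_seq_strictMono_tendsto' hst
  have hIcc : ∀ n, Icc (a n) t ⊆ I := fun n =>
    (Icc_subset_Icc_left (haIoo n).1.le).trans (hI.out hs ht)
  have haI : ∀ n, a n ∈ I := fun n => hIcc n (left_mem_Icc.2 (haIoo n).2.le)
  have hbdd : BddAbove (range (g t)) :=
    (isCompact_range (continuous_slice_of_continuousOn_prod hgcont ht)).bddAbove
  choose x hx using fun n => exists_forall_le_of_continuousOn_prod hgcont (haI n)
  choose ξ hξ hslope using fun n =>
    exists_mem_Ioo_le_slope_iSup (haIoo n).2 (hIcc n) (hderiv (x n)) (hx n) hbdd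
  obtain ⟨x₀, ψ, hψ, hxψ⟩ := CompactSpace.tendsto_subseq x
  have haψ : Tendsto (a ∘ ψ) atTop (𝓝 t) := ha.comp hψ.tendsto_atTop
  have hξψ : Tendsto (ξ ∘ ψ) atTop (𝓝 t) :=
    tendsto_of_tendsto_of_tendsto_of_le_of_le haψ tendsto_const_nhds
      (fun n => (hξ (ψ n)).1.le) fun n => (hξ (ψ n)).2.le
  have hx₀ : ∀ y, g t y ≤ g t x₀ :=
    forall_le_of_tendsto_of_forall_le hgcont ht haψ (fun n => haI (ψ n)) hxψ fun n => hx (ψ n)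
  refine ⟨x₀, (ciSup_eq_of_forall_le hx₀).symm,
    le_diniUL_of_tendsto (f := fun s => ⨆ y, g s y) haψ (fun n => (haIoo (ψ n)).2) ?_
      fun n => hslope (ψ n)⟩
  exact hg'cont.tendsto_comp_prodMk ht hξψ
    (.of_forall fun n => hIcc (ψ n) (Ioo_subset_Icc_self (hξ (ψ n)))) hxψ
end

section
/- Let [a,b] be a closed interval of ℝ and f : [a,b] → ℝ a continuous function such that f(a) = 0 and the upper left-hand Dini derivative satisfies d_L^+ f(t) ≤ 0 for every t ∈ (a,b]. Then f(t) ≤ 0 for all t ∈ [a,b]. -/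
open Filter Topology

open Set

/-! If `f` rose somewhere, then for small `ε > 0` so would `g t = f t - ε (t - a)`, which starts at
`0`. Take the least point `c` of `[a, t₀]` where `g` is at least `g t₀ > 0`; then `c > a`, and
since the left Dini derivative of `g` at `c` is negative, `g` is larger somewhat to the left of
`c`, contradicting minimality. Letting `ε → 0` gives `f ≤ 0`. -/

theorem nonpos_of_forall_exists_left_gt {g : ℝ → ℝ} {a b : ℝ} (hg : ContinuousOn g (Icc a b))
    (ha : g a ≤ 0) (hleft : ∀ t ∈ Ioc a b, ∃ s ∈ Ico a t, g t < g s) :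
    ∀ t ∈ Icc a b, g t ≤ 0 := by
  intro t₀ ht₀
  by_contra! hpos
  set A : Set ℝ := Icc a t₀ ∩ g ⁻¹' Ici (g t₀)
  have hsub : Icc a t₀ ⊆ Icc a b := Icc_subset_Icc le_rfl ht₀.2
  have hA : IsCompact A := isCompact_Icc.of_isClosed_subset
    ((hg.mono hsub).preimage_isClosed_of_isClosed isClosed_Icc isClosed_Ici) inter_subset_left
  obtain ⟨c, ⟨hc, hgc⟩, hleast⟩ :=
    hA.exists_isLeast ⟨t₀, ⟨ht₀.1, le_rfl⟩, le_refl (g t₀)⟩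
  have hac : a < c := hc.1.lt_of_ne fun h => by
    simp only [mem_preimage, mem_Ici, ← h] at hgc
    linarith
  obtain ⟨s, hs, hgs⟩ := hleft c ⟨hac, hc.2.trans ht₀.2⟩
  have hsA : s ∈ A := ⟨⟨hs.1, hs.2.le.trans hc.2⟩, le_trans hgc hgs.le⟩
  exact (hleast hsA).not_gt hs.2

theorem eventually_sub_lt_mul_of_diniUL_lt {f : ℝ → ℝ} {t ε : ℝ} (hd : diniUL f t < ε) :
    ∀ᶠ h in 𝓝[>] (0 : ℝ), f t - f (t - h) < ε * h := by
  filter_upwards [eventually_lt_of_limsup_lt hd, self_mem_nhdsWithin] with h hlt hpos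
  rw [← div_lt_iff₀ (mem_Ioi.mp hpos)]
  exact_mod_cast hlt

theorem le_mul_sub_of_diniUL_nonpos {f : ℝ → ℝ} {a b ε : ℝ} (hε : 0 < ε)
    (hf : ContinuousOn f (Icc a b)) (hfa : f a = 0)
    (hdini : ∀ t ∈ Ioc a b, diniUL f t ≤ 0) :
    ∀ t ∈ Icc a b, f t ≤ ε * (t - a) := by
  have key := nonpos_of_forall_exists_left_gt (g := fun t => f t - ε * (t - a))
    (hf.sub (by fun_prop)) (by simp [hfa]) fun t ht => by
      have hlt : diniUL f t < ε := (hdini t ht).trans_lt (by exact_mod_cast hε)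
      have hsmall : ∀ᶠ h in 𝓝[>] (0 : ℝ), h < t - a :=
        nhdsWithin_le_nhds (Iio_mem_nhds (sub_pos.mpr ht.1))
      obtain ⟨h, hslope, hsmall, hpos⟩ := ((eventually_sub_lt_mul_of_diniUL_lt hlt).and
        (hsmall.and self_mem_nhdsWithin)).exists
      refine ⟨t - h, ⟨by linarith, by linarith⟩, ?_⟩
      linarith
  intro t ht
  linarith [key t ht]

theorem statement8_general
    (a b : ℝ) (f : ℝ → ℝ)
    (hf : ContinuousOn f (Set.Icc a b)) (hfa : f a = 0)
    (hdini : ∀ t ∈ Set.Ioc a b, diniUL f t ≤ (0 : EReal)) :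
    ∀ t ∈ Set.Icc a b, f t ≤ 0 := by
  intro t ht
  have hlim : Tendsto (fun ε : ℝ => ε * (t - a)) (𝓝[>] 0) (𝓝 0) :=
    tendsto_nhdsWithin_of_tendsto_nhds (by simpa using (continuous_mul_const (t - a)).tendsto 0)
  exact ge_of_tendsto hlim <| eventually_nhdsWithin_of_forall fun ε hε =>
    le_mul_sub_of_diniUL_nonpos hε hf hfa hdini t ht

/-- if `f : [a,b] → ℝ` is continuous with `f(a) = 0` and upper left-hand
Dini derivative `≤ 0` on `(a,b]`, then `f ≤ 0` on `[a,b]`. -/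
theorem statement8
    (a b : ℝ) (hab : a ≤ b) (f : ℝ → ℝ)
    (hf : ContinuousOn f (Set.Icc a b)) (hfa : f a = 0)
    (hdini : ∀ t ∈ Set.Ioc a b, diniUL f t ≤ (0 : EReal)) :
    ∀ t ∈ Set.Icc a b, f t ≤ 0 :=
  statement8_general a b f hf hfa hdini
end

section
/- Let 𝔤 be a finite-dimensional real Lie algebra, 𝔥 ⊆ 𝔤 a Lie subalgebra, and 𝔪 ⊆ 𝔤 a subspace with 𝔤 = 𝔥 ⊕ 𝔪 (direct sum of vector spaces) and [𝔥,𝔪] ⊆ 𝔪; for Y ∈ 𝔤, Y_𝔪 denotes the projection of Y onto 𝔪 along 𝔥. Let 𝔨 ⊆ 𝔤 be an ideal, ⟨·,·⟩ an inner product on 𝔤 such that ad Z is ⟨·,·⟩-skew-symmetric for every Z ∈ 𝔨, and let 𝔪_𝔨 ⊆ 𝔪 be a subspace with 𝔨 = (𝔨 ∩ 𝔥) ⊕ 𝔪_𝔨 and 𝔪_𝔨 ⟨·,·⟩-orthogonal to 𝔨 ∩ 𝔥. Let g be the inner product on 𝔪 given by g(X,Y) = ⟨P X, Y⟩ for a ⟨·,·⟩-self-adjoint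 positive-definite P : 𝔪 → 𝔪, let P_{𝔪_𝔨} := Pr ∘ P ∘ Pr where Pr is the ⟨·,·⟩-orthogonal projection onto 𝔪_𝔨, let {Ū_i}_{i=1}^n be a ⟨·,·⟩-orthonormal basis of 𝔪_𝔨 consisting of eigenvectors of P_{𝔪_𝔨} with eigenvalues 0 < p_1 ≤ … ≤ p_n, set U_i := Ū_i/√(p_i) and X := Ū_n, and let {V_j}_{j=1}^m be vectors completing {U_i}_{i=1}^n to a g-orthonormal basis of 𝔪. Then Σ_{i,j} g([U_i,V_j]_𝔪, X)² − Σ_j ‖[X,V_j]_𝔪‖²_g = Σ_{i,j} ⟨[U_i,X], V_j⟩² (p_n² − p_i²) ≥ 0. -/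
/-!
For `W ∈ 𝔨` the component `W_𝔪` lies in `𝔪_𝔨` and differs from `W` by an element of `𝔨 ∩ 𝔥`,
which is `⟨·,·⟩`-orthogonal to `𝔪_𝔨`. Hence, for `u ∈ 𝔪_𝔨` with `Pr (P u) = λ u`,
`g(W_𝔪, u) = ⟨W_𝔪, P u⟩ = ⟨W_𝔪, Pr (P u)⟩ = λ ⟨W, u⟩`. Together with the skew-symmetry of
`ad 𝔨` this gives `g([U_i, V_j]_𝔪, X) = -p_n ⟨[U_i, X], V_j⟩` and
`g([X, V_j]_𝔪, U_i) = p_i ⟨[U_i, X], V_j⟩`. Since `[X, V_j]_𝔪 ∈ 𝔪_𝔨` is in the span of the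
`g`-orthonormal `U_i`, its squared `g`-norm is `Σ_i p_i² ⟨[U_i, X], V_j⟩²`, and the identity
follows; the sign comes from `p_i ≤ p_n`.
-/

theorem LinearMap.apply_self_eq_sum_sq_of_mem_span {R M ι : Type*} [CommRing R]
    [AddCommGroup M] [Module R M] [Fintype ι] [DecidableEq ι] (B : M →ₗ[R] M →ₗ[R] R)
    {e : ι → M} (he : ∀ a b, B (e a) (e b) = if a = b then 1 else 0) {w : M}
    (hw : w ∈ Submodule.span R (Set.range e)) :
    B w w = ∑ a, B w (e a) ^ 2 := by
  obtain ⟨c, rfl⟩ := (Submodule.mem_span_range_iff_exists_fun R).1 hw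
  have hcoeff : ∀ a, B (∑ b, c b • e b) (e a) = c a := fun a => by
    simp [he, Finset.sum_ite_eq']
  calc B (∑ b, c b • e b) (∑ b, c b • e b)
      = ∑ a, c a * B (∑ b, c b • e b) (e a) := by simp [map_sum]
    _ = ∑ a, B (∑ b, c b • e b) (e a) ^ 2 := by simp only [hcoeff, sq]

theorem Submodule.projectionOnto_mem_and_sub_mem_of_mem_sup {R E : Type*} [Ring R]
    [AddCommGroup E] [Module R E] {p q : Submodule R E} (h : IsCompl p q)
    {s : Submodule R p} {t : Submodule R E} (ht : t ≤ q) {x : E}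
    (hx : x ∈ t ⊔ s.map p.subtype) :
    p.projectionOnto q h x ∈ s ∧ x - p.projectionOnto q h x ∈ t := by
  obtain ⟨y, hy, _, ⟨z, hz, rfl⟩, rfl⟩ := Submodule.mem_sup.1 hx
  have hproj : p.projectionOnto q h (y + p.subtype z) = z := by
    rw [map_add, projectionOnto_apply_of_mem_right h (ht hy), zero_add, subtype_apply,
      projectionOnto_apply_left]
  rw [hproj]
  exact ⟨hz, by simpa using hy⟩

theorem LinearMap.apply_eq_mul_of_orthogonal_proj_eq_smul {R E : Type*} [CommRing R]
    [AddCommGroup E] [Module R E] (B : E →ₗ[R] E →ₗ[R] R) (hB : ∀ x y, B x y = B y x)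
    {M : Submodule R E} {S : Submodule R M} (Pr : M →ₗ[R] M)
    (hPr : ∀ x : M, ∀ y ∈ S, B ((x : E) - (Pr x : E)) (y : E) = 0)
    {y : M} (hy : y ∈ S) {u v : M} {c : R} (hv : Pr v = c • u) :
    B y v = c * B y u := by
  have h := hPr v y hy
  rw [map_sub, LinearMap.sub_apply, sub_eq_zero, hv, Submodule.coe_smul, map_smul,
    LinearMap.smul_apply, smul_eq_mul] at h
  rw [hB, h, hB]

theorem LinearMap.apply_projectionOnto_eq {R E : Type*} [CommRing R] [AddCommGroup E]
    [Module R E] (B : E →ₗ[R] E →ₗ[R] R) (hB : ∀ x y, B x y = B y x)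
    {p q : Submodule R E} (h : IsCompl p q) {s : Submodule R p} {t : Submodule R E}
    (ht : t ≤ q) (horth : ∀ x ∈ s.map p.subtype, ∀ y ∈ t, B x y = 0) {x : E}
    (hx : x ∈ t ⊔ s.map p.subtype) {u : p} (hu : u ∈ s) :
    B (p.projectionOnto q h x) u = B x u := by
  have hsub :=
    horth u ⟨u, hu, rfl⟩ _ (Submodule.projectionOnto_mem_and_sub_mem_of_mem_sup h ht hx).2
  rw [hB, map_sub, LinearMap.sub_apply, sub_eq_zero] at hsub
  exact hsub.symm

theorem LinearMap.apply_projectionOnto_eq_eigenvalue_mul {R E : Type*} [CommRing R] [AddCommGroup E]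
    [Module R E] (B : E →ₗ[R] E →ₗ[R] R) (hB : ∀ x y, B x y = B y x)
    {p q : Submodule R E} (h : IsCompl p q) {s : Submodule R p} {t : Submodule R E}
    (ht : t ≤ q) (horth : ∀ x ∈ s.map p.subtype, ∀ y ∈ t, B x y = 0)
    (Pr : p →ₗ[R] p) (hPr : ∀ x : p, ∀ y ∈ s, B ((x : E) - (Pr x : E)) (y : E) = 0)
    (P : p →ₗ[R] p) (hP : ∀ x y : p, B (P x : E) (y : E) = B (x : E) (P y : E))
    {x : E} (hx : x ∈ t ⊔ s.map p.subtype) {u : p} (hu : u ∈ s) {c : R}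
    (hc : Pr (P u) = c • u) :
    B (P (p.projectionOnto q h x) : E) u = c * B x u := by
  rw [hP, B.apply_eq_mul_of_orthogonal_proj_eq_smul hB Pr hPr
    (Submodule.projectionOnto_mem_and_sub_mem_of_mem_sup h ht hx).1 hc,
    B.apply_projectionOnto_eq hB h ht horth hx hu]

theorem statement14_general
    (𝔤 : Type) [LieRing 𝔤] [LieAlgebra ℝ 𝔤]
    (𝔥 : LieSubalgebra ℝ 𝔤) (𝔪 : Submodule ℝ 𝔤)
    (hcompl : IsCompl 𝔪 𝔥.toSubmodule)
    -- the projection of 𝔤 onto 𝔪 along 𝔥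
    (proj : 𝔤 →ₗ[ℝ] ↥𝔪)
    (hproj : proj = Submodule.linearProjOfIsCompl 𝔪 𝔥.toSubmodule hcompl)
    -- 𝔨 is an ideal of 𝔤
    (𝔨 : LieIdeal ℝ 𝔤)
    -- an inner product on 𝔤 for which ad Z is skew-symmetric for every Z ∈ 𝔨
    (ip : 𝔤 →ₗ[ℝ] 𝔤 →ₗ[ℝ] ℝ)
    (hip_symm : ∀ x y : 𝔤, ip x y = ip y x)
    (hip_skew : ∀ Z ∈ 𝔨, ∀ x y : 𝔤, ip ⁅Z, x⁆ y = - ip x ⁅Z, y⁆)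
    -- 𝔪_𝔨 ⊆ 𝔪 with 𝔨 = (𝔨 ∩ 𝔥) ⊕ 𝔪_𝔨, the sum being ip-orthogonal
    (𝔪𝔨 : Submodule ℝ ↥𝔪)
    (hsum : (𝔨.toSubmodule ⊓ 𝔥.toSubmodule) ⊔ 𝔪𝔨.map 𝔪.subtype = 𝔨.toSubmodule)
    (horth : ∀ x ∈ 𝔪𝔨.map 𝔪.subtype, ∀ y ∈ 𝔨.toSubmodule ⊓ 𝔥.toSubmodule, ip x y = 0)
    -- g(X,Y) = ⟨P X, Y⟩ with P ip-self-adjoint and positive definite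
    (P : ↥𝔪 →ₗ[ℝ] ↥𝔪)
    (hP_sa : ∀ X Y : ↥𝔪, ip (P X : 𝔤) (Y : 𝔤) = ip (X : 𝔤) (P Y : 𝔤))
    (g : ↥𝔪 →ₗ[ℝ] ↥𝔪 →ₗ[ℝ] ℝ)
    (hg : ∀ X Y : ↥𝔪, g X Y = ip (P X : 𝔤) (Y : 𝔤))
    -- Pr is the ip-orthogonal projection of 𝔪 onto 𝔪_𝔨
    (Pr : ↥𝔪 →ₗ[ℝ] ↥𝔪)
    (hPr_orth : ∀ x : ↥𝔪, ∀ y ∈ 𝔪𝔨, ip ((x : 𝔤) - (Pr x : 𝔤)) (y : 𝔤) = 0)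
    -- Ubar is an ip-orthonormal basis of 𝔪_𝔨 of eigenvectors of Pr ∘ P ∘ Pr with
    -- eigenvalues 0 < p 0 ≤ … ≤ p n
    (n : ℕ) (Ubar : Fin (n + 1) → ↥𝔪) (hUbar_mem : ∀ i, Ubar i ∈ 𝔪𝔨)
    (hUbar_span : Submodule.span ℝ (Set.range Ubar) = 𝔪𝔨)
    (p : Fin (n + 1) → ℝ) (hp_pos : ∀ i, 0 < p i) (hp_mono : Monotone p)
    (heig : ∀ i, Pr (P (Ubar i)) = p i • Ubar i)
    -- U i = Ubar i / √(p i), X = Ubar n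
    (U : Fin (n + 1) → ↥𝔪) (hU : ∀ i, U i = (Real.sqrt (p i))⁻¹ • Ubar i)
    (X : ↥𝔪) (hX : X = Ubar (Fin.last n))
    -- V completes U to a g-orthonormal basis of 𝔪
    (m : ℕ) (V : Fin m → ↥𝔪)
    (hUV_on : ∀ a b : Fin (n + 1) ⊕ Fin m,
      g (Sum.elim U V a) (Sum.elim U V b) = if a = b then 1 else 0) :
    (∑ i, ∑ j, (g (proj ⁅(U i : 𝔤), (V j : 𝔤)⁆) X) ^ 2)
        - (∑ j, g (proj ⁅(X : 𝔤), (V j : 𝔤)⁆) (proj ⁅(X : 𝔤), (V j : 𝔤)⁆))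
      = ∑ i, ∑ j, (ip ⁅(U i : 𝔤), (X : 𝔤)⁆ (V j : 𝔤)) ^ 2
          * ((p (Fin.last n)) ^ 2 - (p i) ^ 2) ∧
    0 ≤ ∑ i, ∑ j, (ip ⁅(U i : 𝔤), (X : 𝔤)⁆ (V j : 𝔤)) ^ 2
          * ((p (Fin.last n)) ^ 2 - (p i) ^ 2) := by
  have h𝔪𝔨 : ∀ y ∈ 𝔪𝔨, (y : 𝔤) ∈ 𝔨 := fun y hy => hsum.le (Submodule.mem_sup_right ⟨y, hy, rfl⟩)
  have hU_mem : ∀ i, U i ∈ 𝔪𝔨 := fun i => hU i ▸ 𝔪𝔨.smul_mem _ (hUbar_mem i)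
  have hU_eig : ∀ i, Pr (P (U i)) = p i • U i := fun i => by
    rw [hU, map_smul, map_smul, heig, smul_comm]
  have hU_on : ∀ i j, g (U i) (U j) = if i = j then 1 else 0 := fun i j => by
    simpa using hUV_on (Sum.inl i) (Sum.inl j)
  have h𝔪𝔨_le : 𝔪𝔨 ≤ Submodule.span ℝ (Set.range U) :=
    hUbar_span ▸ Submodule.span_le.2 (Set.range_subset_iff.2 fun i => by
      rw [SetLike.mem_coe, ← smul_inv_smul₀ (Real.sqrt_pos.2 (hp_pos i)).ne' (Ubar i), ← hU]
      exact Submodule.smul_mem _ _ (Submodule.subset_span ⟨i, rfl⟩))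
  have hproj_mem : ∀ W ∈ 𝔨, proj W ∈ 𝔪𝔨 := fun W hW => hproj ▸
    (Submodule.projectionOnto_mem_and_sub_mem_of_mem_sup hcompl inf_le_right (hsum.ge hW)).1
  have hg_proj : ∀ W ∈ 𝔨, ∀ u ∈ 𝔪𝔨, ∀ c, Pr (P u) = c • u → g (proj W) u = c * ip W u :=
    fun W hW u hu c hc => hproj ▸ (hg _ _).trans (ip.apply_projectionOnto_eq_eigenvalue_mul
      hip_symm hcompl inf_le_right horth Pr hPr_orth P hP_sa (hsum.ge hW) hu hc)
  have hX_mem : X ∈ 𝔪𝔨 := hX ▸ hUbar_mem _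
  have hg_UV_X : ∀ i j, g (proj ⁅(U i : 𝔤), (V j : 𝔤)⁆) X
      = -(p (Fin.last n) * ip ⁅(U i : 𝔤), (X : 𝔤)⁆ (V j)) := fun i j => by
    rw [hg_proj _ (lie_mem_left ℝ 𝔤 𝔨 _ _ (h𝔪𝔨 _ (hU_mem i))) _ hX_mem _ (hX ▸ heig _),
      hip_skew _ (h𝔪𝔨 _ (hU_mem i)), hip_symm, mul_neg]
  have hg_XV_U : ∀ i j, g (proj ⁅(X : 𝔤), (V j : 𝔤)⁆) (U i)
      = p i * ip ⁅(U i : 𝔤), (X : 𝔤)⁆ (V j) := fun i j => by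
    rw [hg_proj _ (lie_mem_left ℝ 𝔤 𝔨 _ _ (h𝔪𝔨 _ hX_mem)) _ (hU_mem i) _ (hU_eig i),
      hip_skew _ (h𝔪𝔨 _ hX_mem), hip_symm, ← lie_skew, map_neg, LinearMap.neg_apply, neg_neg]
  have hnorm_XV : ∀ j, g (proj ⁅(X : 𝔤), (V j : 𝔤)⁆) (proj ⁅(X : 𝔤), (V j : 𝔤)⁆)
      = ∑ i, (p i * ip ⁅(U i : 𝔤), (X : 𝔤)⁆ (V j)) ^ 2 := fun j => by
    rw [g.apply_self_eq_sum_sq_of_mem_span hU_on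
      (h𝔪𝔨_le (hproj_mem _ (lie_mem_left ℝ 𝔤 𝔨 _ (V j : 𝔤) (h𝔪𝔨 _ hX_mem))))]
    simp only [hg_XV_U]
  have hp_sq_le : ∀ i, p i ^ 2 ≤ p (Fin.last n) ^ 2 := fun i =>
    pow_le_pow_left₀ (hp_pos i).le (hp_mono (Fin.le_last i)) 2
  refine ⟨?_, Finset.sum_nonneg fun i _ => Finset.sum_nonneg fun j _ =>
    mul_nonneg (sq_nonneg _) (sub_nonneg.2 (hp_sq_le i))⟩
  simp only [hg_UV_X, hnorm_XV, neg_sq, mul_pow, mul_sub, Finset.sum_sub_distrib]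
  rw [Finset.sum_comm (γ := Fin m)]
  simp only [mul_comm]

/-- the key estimate in the proof of the algebraic Bochner result.
With `𝔤 = 𝔥 ⊕ 𝔪` reductive, `𝔨` an ideal with `ad 𝔨` skew-symmetric for a background
inner product `⟨·,·⟩ = ip`, `𝔪_𝔨` a complement of `𝔨 ∩ 𝔥` in `𝔨` orthogonal to it,
`g = ⟨P ·, ·⟩` an inner product on `𝔪`, `Ubar i` an `ip`-orthonormal eigenbasis of the
compression `P_{𝔪_𝔨} = Pr ∘ P ∘ Pr` with eigenvalues `0 < p 0 ≤ … ≤ p n`,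
`U i = Ubar i / √(p i)`, `X = Ubar n`, and `V j` completing the `U i` to a `g`-orthonormal
basis of `𝔪`, one has
`Σ_{i,j} g([U i, V j]_𝔪, X)² − Σ_j ‖[X, V j]_𝔪‖²_g
  = Σ_{i,j} ⟨[U i, X], V j⟩² (p n² − p i²) ≥ 0`. -/
theorem statement14
    (𝔤 : Type) [LieRing 𝔤] [LieAlgebra ℝ 𝔤] [FiniteDimensional ℝ 𝔤]
    (𝔥 : LieSubalgebra ℝ 𝔤) (𝔪 : Submodule ℝ 𝔤)
    (hcompl : IsCompl 𝔪 𝔥.toSubmodule)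
    (hred : ∀ Z ∈ 𝔥, ∀ X ∈ 𝔪, ⁅Z, X⁆ ∈ 𝔪)
    -- the projection of 𝔤 onto 𝔪 along 𝔥
    (proj : 𝔤 →ₗ[ℝ] ↥𝔪)
    (hproj : proj = Submodule.linearProjOfIsCompl 𝔪 𝔥.toSubmodule hcompl)
    -- 𝔨 is an ideal of 𝔤
    (𝔨 : LieIdeal ℝ 𝔤)
    -- an inner product on 𝔤 for which ad Z is skew-symmetric for every Z ∈ 𝔨
    (ip : 𝔤 →ₗ[ℝ] 𝔤 →ₗ[ℝ] ℝ)
    (hip_symm : ∀ x y : 𝔤, ip x y = ip y x)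
    (hip_pos : ∀ x : 𝔤, x ≠ 0 → 0 < ip x x)
    (hip_skew : ∀ Z ∈ 𝔨, ∀ x y : 𝔤, ip ⁅Z, x⁆ y = - ip x ⁅Z, y⁆)
    -- 𝔪_𝔨 ⊆ 𝔪 with 𝔨 = (𝔨 ∩ 𝔥) ⊕ 𝔪_𝔨, the sum being ip-orthogonal
    (𝔪𝔨 : Submodule ℝ ↥𝔪)
    (hsum : (𝔨.toSubmodule ⊓ 𝔥.toSubmodule) ⊔ 𝔪𝔨.map 𝔪.subtype = 𝔨.toSubmodule)
    (hdisj : Disjoint (𝔨.toSubmodule ⊓ 𝔥.toSubmodule) (𝔪𝔨.map 𝔪.subtype))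
    (horth : ∀ x ∈ 𝔪𝔨.map 𝔪.subtype, ∀ y ∈ 𝔨.toSubmodule ⊓ 𝔥.toSubmodule, ip x y = 0)
    -- g(X,Y) = ⟨P X, Y⟩ with P ip-self-adjoint and positive definite
    (P : ↥𝔪 →ₗ[ℝ] ↥𝔪)
    (hP_sa : ∀ X Y : ↥𝔪, ip (P X : 𝔤) (Y : 𝔤) = ip (X : 𝔤) (P Y : 𝔤))
    (hP_pos : ∀ X : ↥𝔪, X ≠ 0 → 0 < ip (P X : 𝔤) (X : 𝔤))
    (g : ↥𝔪 →ₗ[ℝ] ↥𝔪 →ₗ[ℝ] ℝ)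
    (hg : ∀ X Y : ↥𝔪, g X Y = ip (P X : 𝔤) (Y : 𝔤))
    -- Pr is the ip-orthogonal projection of 𝔪 onto 𝔪_𝔨
    (Pr : ↥𝔪 →ₗ[ℝ] ↥𝔪)
    (hPr_mem : ∀ x : ↥𝔪, Pr x ∈ 𝔪𝔨)
    (hPr_id : ∀ x ∈ 𝔪𝔨, Pr x = x)
    (hPr_orth : ∀ x : ↥𝔪, ∀ y ∈ 𝔪𝔨, ip ((x : 𝔤) - (Pr x : 𝔤)) (y : 𝔤) = 0)
    -- Ubar is an ip-orthonormal basis of 𝔪_𝔨 of eigenvectors of Pr ∘ P ∘ Pr with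
    -- eigenvalues 0 < p 0 ≤ … ≤ p n
    (n : ℕ) (Ubar : Fin (n + 1) → ↥𝔪) (hUbar_mem : ∀ i, Ubar i ∈ 𝔪𝔨)
    (hUbar_on : ∀ i j, ip (Ubar i : 𝔤) (Ubar j : 𝔤) = if i = j then 1 else 0)
    (hUbar_span : Submodule.span ℝ (Set.range Ubar) = 𝔪𝔨)
    (p : Fin (n + 1) → ℝ) (hp_pos : ∀ i, 0 < p i) (hp_mono : Monotone p)
    (heig : ∀ i, Pr (P (Ubar i)) = p i • Ubar i)
    -- U i = Ubar i / √(p i), X = Ubar n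
    (U : Fin (n + 1) → ↥𝔪) (hU : ∀ i, U i = (Real.sqrt (p i))⁻¹ • Ubar i)
    (X : ↥𝔪) (hX : X = Ubar (Fin.last n))
    -- V completes U to a g-orthonormal basis of 𝔪
    (m : ℕ) (V : Fin m → ↥𝔪)
    (hUV_on : ∀ a b : Fin (n + 1) ⊕ Fin m,
      g (Sum.elim U V a) (Sum.elim U V b) = if a = b then 1 else 0)
    (hUV_span : Submodule.span ℝ (Set.range (Sum.elim U V)) = ⊤) :
    (∑ i, ∑ j, (g (proj ⁅(U i : 𝔤), (V j : 𝔤)⁆) X) ^ 2)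
        - (∑ j, g (proj ⁅(X : 𝔤), (V j : 𝔤)⁆) (proj ⁅(X : 𝔤), (V j : 𝔤)⁆))
      = ∑ i, ∑ j, (ip ⁅(U i : 𝔤), (X : 𝔤)⁆ (V j : 𝔤)) ^ 2
          * ((p (Fin.last n)) ^ 2 - (p i) ^ 2) ∧
    0 ≤ ∑ i, ∑ j, (ip ⁅(U i : 𝔤), (X : 𝔤)⁆ (V j : 𝔤)) ^ 2
          * ((p (Fin.last n)) ^ 2 - (p i) ^ 2) :=
  statement14_general 𝔤 𝔥 𝔪 hcompl proj hproj 𝔨 ip hip_symm hip_skew 𝔪𝔨 hsum horth P hP_sa g hg Pr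
    hPr_orth n Ubar hUbar_mem hUbar_span p hp_pos hp_mono heig U hU X hX m V hUV_on
end
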